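/- Let C ⊂ M_ℝ be a compact convex subset with nonempty interior and g₁, g₂ : C → ℝ continuous concave functions. Fix x in the set where g₁+g₂ attains its maximum. Then the convex set B = ∂g₁(x) ∩ (-∂g₂(x)) is bounded, and the minimal face F of ∂g₁(x) containing B contains no lines (i.e., F contains no subset of the form ℝu₁ + u₂ with u₁ ≠ 0). -/

import Mathlib

/-!
For `u ∈ B` and every `z ∈ C`, the number `⟪u, z - x⟫` is squeezed between `g₁ z - g₁ x` and
`g₂ x - g₂ z`. Since `C` has an interior point `p`, every vector is a positive multiple of some
`z - p`, so the functionals `⟪u, ·⟫`, `u ∈ B`, are pointwise bounded, and Banach–Steinhaus bounds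
`B`. The face `F` lies in `∂g₁(x)`, and a line `t • u₁ + u₂` inside `∂g₁(x)` forces
`⟪u₁, z - x⟫ = 0` on `C` (let `t → ±∞`), hence `u₁ = 0`.
-/

open RealInnerProductSpace Set Filter Topology Bornology

section SupDifferential

variable {E : Type*} [NormedAddCommGroup E] [InnerProductSpace ℝ E]

def supDifferential (C : Set E) (g : E → ℝ) (x : E) : Set E :=
  {u | ∀ z ∈ C, g z - g x ≤ ⟪u, z - x⟫}

lemma exists_pos_add_smul_mem {C : Set E} {p : E} (hp : C ∈ 𝓝 p) (w : E) :
    ∃ t > (0 : ℝ), p + t • w ∈ C := by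
  have hcont : Tendsto (fun t : ℝ ↦ p + t • w) (𝓝[>] 0) (𝓝 p) := by
    have : Continuous fun t : ℝ ↦ p + t • w := by fun_prop
    simpa using (this.tendsto 0).mono_left nhdsWithin_le_nhds
  exact ((hcont.eventually hp).and self_mem_nhdsWithin).exists.imp fun t h ↦ ⟨h.2, h.1⟩

lemma inner_add_smul_sub_sub_inner_sub (u p x : E) (t : ℝ) (w : E) :
    ⟪u, (p + t • w) - x⟫ - ⟪u, p - x⟫ = t * ⟪u, w⟫ := by
  rw [← inner_sub_right, sub_sub_sub_cancel_right, add_sub_cancel_left, real_inner_smul_right]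

lemma eq_zero_of_forall_inner_sub_eq_zero {C : Set E} (hC : (interior C).Nonempty)
    {u x : E} (h : ∀ z ∈ C, ⟪u, z - x⟫ = 0) : u = 0 := by
  obtain ⟨p, hp⟩ := hC
  obtain ⟨t, ht, hq⟩ := exists_pos_add_smul_mem (mem_interior_iff_mem_nhds.mp hp) u
  have hsplit := inner_add_smul_sub_sub_inner_sub u p x t u
  rw [h _ hq, h p (interior_subset hp), sub_zero, zero_eq_mul] at hsplit
  exact inner_self_eq_zero.mp (hsplit.resolve_left ht.ne')

lemma isBounded_of_forall_abs_inner_le [CompleteSpace E] {S : Set E}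
    (h : ∀ w, ∃ M, ∀ u ∈ S, |⟪u, w⟫| ≤ M) : IsBounded S := by
  obtain ⟨M, hM⟩ := banach_steinhaus (g := fun u : S ↦ innerSL ℝ (u : E)) fun w ↦
    (h w).imp fun M hM u ↦ by simpa using hM u u.2
  exact isBounded_iff_forall_norm_le.mpr ⟨M, fun u hu ↦ innerSL_apply_norm ℝ u ▸ hM ⟨u, hu⟩⟩

lemma isBounded_setOf_forall_inner_sub_mem_Icc [CompleteSpace E] {C : Set E}
    (hC : (interior C).Nonempty) (a b : E → ℝ) (x : E) :
    IsBounded {u : E | ∀ z ∈ C, ⟪u, z - x⟫ ∈ Icc (a z) (b z)} := by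
  obtain ⟨p, hp⟩ := hC
  refine isBounded_of_forall_abs_inner_le fun w ↦ ?_
  obtain ⟨t, ht, hq⟩ := exists_pos_add_smul_mem (mem_interior_iff_mem_nhds.mp hp) w
  refine ⟨(max |a (p + t • w)| |b (p + t • w)| + max |a p| |b p|) / t, fun u hu ↦ ?_⟩
  obtain ⟨hq₁, hq₂⟩ := hu _ hq
  obtain ⟨hp₁, hp₂⟩ := hu p (interior_subset hp)
  calc |⟪u, w⟫| = |⟪u, (p + t • w) - x⟫ - ⟪u, p - x⟫| / t := by
        rw [inner_add_smul_sub_sub_inner_sub, abs_mul, abs_of_pos ht,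
          mul_div_cancel_left₀ _ ht.ne']
    _ ≤ (|⟪u, (p + t • w) - x⟫| + |⟪u, p - x⟫|) / t := by gcongr; exact abs_sub _ _
    _ ≤ _ := by gcongr; exacts [abs_le_max_abs_abs hq₁ hq₂, abs_le_max_abs_abs hp₁ hp₂]

lemma isBounded_supDifferential_inter_neg [CompleteSpace E] {C : Set E}
    (hC : (interior C).Nonempty) (g₁ g₂ : E → ℝ) (x : E) :
    IsBounded (supDifferential C g₁ x ∩ -supDifferential C g₂ x) := by
  refine (isBounded_setOf_forall_inner_sub_mem_Icc hC (fun z ↦ g₁ z - g₁ x)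
    (fun z ↦ g₂ x - g₂ z) x).subset fun u ⟨hu₁, hu₂⟩ z hz ↦ ⟨hu₁ z hz, ?_⟩
  have := hu₂ z hz
  rw [inner_neg_left] at this
  linarith

lemma eq_zero_of_forall_smul_add_mem_supDifferential {C : Set E} (hC : (interior C).Nonempty)
    {g : E → ℝ} {x u₁ u₂ : E} (hline : ∀ t : ℝ, t • u₁ + u₂ ∈ supDifferential C g x) :
    u₁ = 0 := by
  refine eq_zero_of_forall_inner_sub_eq_zero hC (x := x) fun z hz ↦ ?_
  by_contra hne
  have := hline ((g z - g x - ⟪u₂, z - x⟫ - 1) / ⟪u₁, z - x⟫) z hz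
  rw [inner_add_left, real_inner_smul_left, div_mul_cancel₀ _ hne] at this
  linarith

end SupDifferential

theorem stmt3_general {n : ℕ}
    (C : Set (EuclideanSpace ℝ (Fin n)))
    (hCint : (interior C).Nonempty)
    (g₁ g₂ : EuclideanSpace ℝ (Fin n) → ℝ)
    (x : EuclideanSpace ℝ (Fin n))
    (A B F : Set (EuclideanSpace ℝ (Fin n)))
    (hA : A = {u | ∀ z ∈ C, g₁ z - g₁ x ≤ ⟪u, z - x⟫})
    (hB : B = A ∩ -{u | ∀ z ∈ C, g₂ z - g₂ x ≤ ⟪u, z - x⟫})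
    (hF : F = ⋂₀ {F' : Set (EuclideanSpace ℝ (Fin n)) | IsExtreme ℝ A F' ∧ B ⊆ F'}) :
    Bornology.IsBounded B ∧
      ¬ ∃ u₁ u₂ : EuclideanSpace ℝ (Fin n), u₁ ≠ 0 ∧ ∀ t : ℝ, t • u₁ + u₂ ∈ F := by
  have hFA : F ⊆ A := hF ▸ sInter_subset_of_mem ⟨IsExtreme.refl ℝ A, hB ▸ inter_subset_left⟩
  subst hA hB
  refine ⟨isBounded_supDifferential_inter_neg hCint g₁ g₂ x, ?_⟩
  rintro ⟨u₁, u₂, hu₁, hline⟩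
  exact hu₁ (eq_zero_of_forall_smul_add_mem_supDifferential hCint fun t ↦ hFA (hline t))

/-- For continuous concave `g₁, g₂` on a compact convex `C ⊂ ℝⁿ` with
nonempty interior and a maximizer `x` of `g₁ + g₂`, the set
`B = ∂g₁(x) ∩ (-∂g₂(x))` is bounded, and the minimal face `F` of `∂g₁(x)`
containing `B` contains no lines. -/
theorem stmt3 {n : ℕ}
    (C : Set (EuclideanSpace ℝ (Fin n))) (hCcpt : IsCompact C) (hCconv : Convex ℝ C)
    (hCint : (interior C).Nonempty)
    (g₁ g₂ : EuclideanSpace ℝ (Fin n) → ℝ)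
    (hg₁ : ConcaveOn ℝ C g₁) (hg₂ : ConcaveOn ℝ C g₂)
    (hc₁ : ContinuousOn g₁ C) (hc₂ : ContinuousOn g₂ C)
    (x : EuclideanSpace ℝ (Fin n))
    (hx : x ∈ {p ∈ C | ∀ y ∈ C, g₁ y + g₂ y ≤ g₁ p + g₂ p})
    (A B F : Set (EuclideanSpace ℝ (Fin n)))
    (hA : A = {u | ∀ z ∈ C, g₁ z - g₁ x ≤ ⟪u, z - x⟫})
    (hB : B = A ∩ -{u | ∀ z ∈ C, g₂ z - g₂ x ≤ ⟪u, z - x⟫})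
    (hF : F = ⋂₀ {F' : Set (EuclideanSpace ℝ (Fin n)) | IsExtreme ℝ A F' ∧ B ⊆ F'}) :
    Bornology.IsBounded B ∧
      ¬ ∃ u₁ u₂ : EuclideanSpace ℝ (Fin n), u₁ ≠ 0 ∧ ∀ t : ℝ, t • u₁ + u₂ ∈ F :=
  stmt3_general C hCint g₁ g₂ x A B F hA hB hF
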